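/- arXiv:2005.14042 — 2 statements merged into one kernel-verified Lean document; each statement's English description precedes it below -/
import Mathlib

section
/- (Corollary: algorithm for the stationary model sBC.) Let A ∈ ℝ^{M×N} be nonnegative, Y ∈ ℝ^{M×T} nonnegative, λ_B, μ_B, λ_C, μ_C, τ ≥ 0, and let TV, P, Z be as defined with ε_TV > 0 and nonempty neighbourhood sets. Define H(B,C) := (1/2)‖ABC − Y‖_F² + λ_C‖C‖₁ + (μ_C/2)‖C‖_F² + λ_B‖B‖₁ + (μ_B/2)‖B‖_F² + (τ/2)TV(B). Given strictly positive B^{[d]} ∈ ℝ^{N×K} and C^{[d]} ∈ ℝ^{K×T}, define B^{[d+1]} := B^{[d]} ∘ (AᵀY(C^{[d]})ᵀ + τP(B^{[d]}) ∘ Z(B^{[d]})) ⊘ (AᵀAB^{[d]}C^{[d]}(C^{[d]})ᵀ + μ_B B^{[d]} + λ_B𝟙_{N×K} + τB^{[d]} ∘ P(B^{[d]})) and C^{[d+1]} := C^{[d]} ∘ ((B^{[d+1]})ᵀAᵀY) ⊘ ((B^{[d+1]})ᵀAᵀAB^{[d+1]}C^{[d]} + μ_C C^{[d]} + λ_C𝟙_{K×T}).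 Assume every entry of each of the two denominator matrices is strictly positive. Then H(B^{[d+1]}, C^{[d+1]}) ≤ H(B^{[d]}, C^{[d]}). -/
open Matrix BigOperators

/-- `|∇_{nk}B| = sqrt(ε² + Σ_{ℓ∈𝒩_n}(B_{nk} − B_{ℓk})²)`. -/
noncomputable def gradAbs (N K : ℕ) (ε : ℝ) (nbr : Fin N → Finset (Fin N))
    (B : Matrix (Fin N) (Fin K) ℝ) (n : Fin N) (k : Fin K) : ℝ :=
  Real.sqrt (ε ^ 2 + ∑ ℓ ∈ nbr n, (B n k - B ℓ k) ^ 2)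

/-- The smoothed isotropic total variation `TV(B) = Σ_k Σ_n |∇_{nk}B|`. -/
noncomputable def smoothTV (N K : ℕ) (ε : ℝ) (nbr : Fin N → Finset (Fin N))
    (B : Matrix (Fin N) (Fin K) ℝ) : ℝ :=
  ∑ k : Fin K, ∑ n : Fin N, gradAbs N K ε nbr B n k

/-- The matrix `P(B)` from the TV surrogate construction. -/
noncomputable def Pmat (N K : ℕ) (ε : ℝ) (nbr : Fin N → Finset (Fin N))
    (B : Matrix (Fin N) (Fin K) ℝ) : Matrix (Fin N) (Fin K) ℝ :=
  fun n k =>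
    (1 / gradAbs N K ε nbr B n k) * (∑ _ℓ ∈ nbr n, (1 : ℝ))
      + ∑ ℓ ∈ Finset.univ.filter (fun ℓ => n ∈ nbr ℓ), 1 / gradAbs N K ε nbr B ℓ k

/-- The matrix `Z(B)` from the TV surrogate construction. -/
noncomputable def Zmat (N K : ℕ) (ε : ℝ) (nbr : Fin N → Finset (Fin N))
    (B : Matrix (Fin N) (Fin K) ℝ) : Matrix (Fin N) (Fin K) ℝ :=
  fun n k =>
    (1 / Pmat N K ε nbr B n k) *
      ((1 / gradAbs N K ε nbr B n k) * (∑ ℓ ∈ nbr n, (B n k + B ℓ k) / 2)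
        + ∑ ℓ ∈ Finset.univ.filter (fun ℓ => n ∈ nbr ℓ),
            (B n k + B ℓ k) / (2 * gradAbs N K ε nbr B ℓ k))

/-- The cost function of the stationary NMF model `sBC`:
`H(B,C) = ½‖ABC − Y‖_F² + λ_C‖C‖₁ + (μ_C/2)‖C‖_F² + λ_B‖B‖₁ + (μ_B/2)‖B‖_F²
  + (τ/2)TV(B)`. -/
noncomputable def costSBC (M N K T : ℕ)
    (A : Matrix (Fin M) (Fin N) ℝ) (Y : Matrix (Fin M) (Fin T) ℝ)
    (lamB muB lamC muC τ ε : ℝ) (nbr : Fin N → Finset (Fin N))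
    (B : Matrix (Fin N) (Fin K) ℝ) (C : Matrix (Fin K) (Fin T) ℝ) : ℝ :=
  (1/2) * (∑ m, ∑ t, ((A * B * C) m t - Y m t) ^ 2)
    + lamC * (∑ k, ∑ t, |C k t|) + (muC/2) * (∑ k, ∑ t, (C k t) ^ 2)
    + lamB * (∑ n, ∑ k, |B n k|) + (muB/2) * (∑ n, ∑ k, (B n k) ^ 2)
    + (τ/2) * smoothTV N K ε nbr B

section auxiliary

lemma cross_le' {ci cj xi xj : ℝ} (hci : 0 < ci) (hcj : 0 < cj) :
    xi * xj ≤ (cj / ci * xi ^ 2 + ci / cj * xj ^ 2) / 2 := by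
  have key : cj / ci * xi ^ 2 + ci / cj * xj ^ 2 - 2 * (xi * xj)
      = (cj * xi - ci * xj) ^ 2 / (ci * cj) := by
    field_simp; ring
  have h2 := div_nonneg (sq_nonneg (cj * xi - ci * xj)) (mul_pos hci hcj).le
  linarith

lemma quad_min' {a b x y : ℝ} (ha : 0 < a) (hx : a * x = b) :
    a / 2 * x ^ 2 - b * x ≤ a / 2 * y ^ 2 - b * y := by
  subst hx
  nlinarith [mul_nonneg ha.le (sq_nonneg (x - y))]

lemma quad_form_le' {ι : Type*} [Fintype ι] (Q : ι → ι → ℝ)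
    (hQs : ∀ i j, Q i j = Q j i) (hQn : ∀ i j, 0 ≤ Q i j)
    (c : ι → ℝ) (hc : ∀ i, 0 < c i) (x : ι → ℝ) :
    ∑ i, ∑ j, Q i j * x i * x j ≤ ∑ i, (∑ j, Q i j * c j) * x i ^ 2 / c i := by
  have step1 : ∑ i, ∑ j, Q i j * x i * x j
      ≤ ∑ i, ∑ j, Q i j * ((c j / c i * x i ^ 2 + c i / c j * x j ^ 2) / 2) := by
    refine Finset.sum_le_sum fun i _ => Finset.sum_le_sum fun j _ => ?_
    rw [mul_assoc]
    exact mul_le_mul_of_nonneg_left (cross_le' (hc i) (hc j)) (hQn i j)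
  refine step1.trans_eq ?_
  have expand : ∀ i j : ι, Q i j * ((c j / c i * x i ^ 2 + c i / c j * x j ^ 2) / 2)
      = Q i j * (c j / c i) * x i ^ 2 / 2 + Q i j * (c i / c j) * x j ^ 2 / 2 :=
    fun i j => by ring
  simp_rw [expand, Finset.sum_add_distrib]
  have swap : ∑ i, ∑ j, Q i j * (c i / c j) * x j ^ 2 / 2
      = ∑ i, ∑ j, Q i j * (c j / c i) * x i ^ 2 / 2 := by
    rw [Finset.sum_comm]
    exact Finset.sum_congr rfl fun i _ => Finset.sum_congr rfl fun j _ => by rw [hQs]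
  rw [swap]
  have per : ∀ i : ι, ∑ j, Q i j * (c j / c i) * x i ^ 2 / 2
      = (∑ j, Q i j * c j) * x i ^ 2 / c i / 2 := by
    intro i
    rw [Finset.sum_mul, Finset.sum_div, Finset.sum_div]
    exact Finset.sum_congr rfl fun j _ => by
      rw [div_div]
      first
      | (field_simp; ring)
      | field_simp
  simp_rw [per]
  rw [← Finset.sum_add_distrib]
  exact Finset.sum_congr rfl fun i _ => by ring

/-- Master majorize–minimize step for a quadratic-plus-ℓ¹ objective under the
multiplicative update. -/
lemma mm_step' {ι : Type*} [Fintype ι] (Q : ι → ι → ℝ)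
    (hQs : ∀ i j, Q i j = Q j i) (hQn : ∀ i j, 0 ≤ Q i j)
    (c x L E D : ι → ℝ) (hc : ∀ i, 0 < c i)
    (lam mu : ℝ) (hlam : 0 ≤ lam)
    (hden : ∀ i, 0 < (∑ j, Q i j * c j) + mu * c i + lam + D i * c i)
    (hx : ∀ i, x i = c i * (L i + E i)
        / ((∑ j, Q i j * c j) + mu * c i + lam + D i * c i)) :
    (1/2) * (∑ i, ∑ j, Q i j * x i * x j) - (∑ i, L i * x i) + lam * ∑ i, |x i|
      + (mu/2) * ∑ i, x i ^ 2 + (1/2) * ∑ i, D i * x i ^ 2 - ∑ i, E i * x i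
    ≤ (1/2) * (∑ i, ∑ j, Q i j * c i * c j) - (∑ i, L i * c i) + lam * ∑ i, |c i|
      + (mu/2) * ∑ i, c i ^ 2 + (1/2) * ∑ i, D i * c i ^ 2 - ∑ i, E i * c i := by
  set den : ι → ℝ := fun i => (∑ j, Q i j * c j) + mu * c i + lam + D i * c i with hdendef
  set a : ι → ℝ := fun i => den i / c i with hadef
  have ha : ∀ i, 0 < a i := fun i => div_pos (hden i) (hc i)
  set φ : ι → ℝ → ℝ := fun i z => a i / 2 * z ^ 2 - (L i + E i) * z with hφdef
  have absbd : ∀ i, |x i| ≤ (x i ^ 2 + c i ^ 2) / (2 * c i) := by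
    intro i
    rw [le_div_iff₀ (by have := hc i; positivity)]
    nlinarith [sq_nonneg (|x i| - c i), abs_nonneg (x i), sq_abs (x i)]
  have hquad := quad_form_le' Q hQs hQn c hc x
  have claimA :
      (1/2) * (∑ i, ∑ j, Q i j * x i * x j) - (∑ i, L i * x i) + lam * ∑ i, |x i|
        + (mu/2) * ∑ i, x i ^ 2 + (1/2) * ∑ i, D i * x i ^ 2 - ∑ i, E i * x i
      ≤ (∑ i, φ i (x i)) + lam / 2 * ∑ i, c i := by
    have h1 : lam * ∑ i, |x i| ≤ lam * ∑ i, (x i ^ 2 + c i ^ 2) / (2 * c i) :=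
      mul_le_mul_of_nonneg_left (Finset.sum_le_sum fun i _ => absbd i) hlam
    have h2 : (∑ i, φ i (x i)) + lam / 2 * ∑ i, c i
        = (1/2) * (∑ i, (∑ j, Q i j * c j) * x i ^ 2 / c i) - (∑ i, L i * x i)
          + lam * ∑ i, (x i ^ 2 + c i ^ 2) / (2 * c i)
          + (mu/2) * ∑ i, x i ^ 2 + (1/2) * ∑ i, D i * x i ^ 2 - ∑ i, E i * x i := by
      simp only [hφdef, hadef, hdendef]
      rw [Finset.mul_sum, Finset.mul_sum, Finset.mul_sum, Finset.mul_sum, Finset.mul_sum]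
      rw [← Finset.sum_sub_distrib, ← Finset.sum_add_distrib, ← Finset.sum_add_distrib,
        ← Finset.sum_add_distrib, ← Finset.sum_add_distrib, ← Finset.sum_sub_distrib]
      refine Finset.sum_congr rfl fun i _ => ?_
      have hci := (hc i).ne'
      field_simp
      ring
    rw [h2]
    linarith [mul_le_mul_of_nonneg_left hquad (by norm_num : (0:ℝ) ≤ 1/2)]
  have claimB : (∑ i, φ i (x i)) ≤ ∑ i, φ i (c i) := by
    refine Finset.sum_le_sum fun i _ => ?_
    refine quad_min' (ha i) ?_
    rw [hx i]
    have hci := (hc i).ne'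
    have hdi := (hden i).ne'
    simp only [hadef, hdendef]
    field_simp
    rw [mul_comm (c i) (D i)]
    exact mul_div_cancel_left₀ _ hdi
  have claimC : (∑ i, φ i (c i)) + lam / 2 * ∑ i, c i
      = (1/2) * (∑ i, ∑ j, Q i j * c i * c j) - (∑ i, L i * c i) + lam * ∑ i, |c i|
        + (mu/2) * ∑ i, c i ^ 2 + (1/2) * ∑ i, D i * c i ^ 2 - ∑ i, E i * c i := by
    have habs : ∀ i : ι, |c i| = c i := fun i => abs_of_pos (hc i)
    have hq : ∀ i : ι, ∑ j, Q i j * c i * c j = (∑ j, Q i j * c j) * c i := by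
      intro i
      rw [Finset.sum_mul]
      exact Finset.sum_congr rfl fun j _ => by ring
    simp only [hφdef, hadef, hdendef, habs]
    simp_rw [hq]
    rw [Finset.mul_sum, Finset.mul_sum, Finset.mul_sum, Finset.mul_sum, Finset.mul_sum]
    rw [← Finset.sum_sub_distrib, ← Finset.sum_add_distrib, ← Finset.sum_add_distrib,
      ← Finset.sum_add_distrib, ← Finset.sum_add_distrib, ← Finset.sum_sub_distrib]
    refine Finset.sum_congr rfl fun i _ => ?_
    have hci := (hc i).ne'
    field_simp
    ring
  calc _ ≤ (∑ i, φ i (x i)) + lam / 2 * ∑ i, c i := claimA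
    _ ≤ (∑ i, φ i (c i)) + lam / 2 * ∑ i, c i := by linarith [claimB]
    _ = _ := claimC

lemma sum_swap4' {α β γ δ : Type*} [Fintype α] [Fintype β] [Fintype γ] [Fintype δ]
    (f : α → β → γ → δ → ℝ) :
    ∑ a, ∑ b, ∑ c, ∑ d, f a b c d = ∑ c, ∑ d, ∑ a, ∑ b, f a b c d := by
  have h1 : ∀ a : α, ∑ b : β, ∑ c : γ, ∑ d : δ, f a b c d
      = ∑ c : γ, ∑ d : δ, ∑ b : β, f a b c d := by
    intro a
    rw [Finset.sum_comm]
    exact Finset.sum_congr rfl fun c _ => Finset.sum_comm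
  simp_rw [h1]
  rw [Finset.sum_comm]
  exact Finset.sum_congr rfl fun c _ => Finset.sum_comm

variable {M' N' K' T' : ℕ}

lemma entry_expand' (U : Matrix (Fin M') (Fin N') ℝ) (V : Matrix (Fin K') (Fin T') ℝ)
    (X : Matrix (Fin N') (Fin K') ℝ) (i : Fin M') (s : Fin T') :
    (U * X * V) i s = ∑ p : Fin N' × Fin K', U i p.1 * X p.1 p.2 * V p.2 s := by
  rw [Fintype.sum_prod_type]
  simp only [Matrix.mul_apply, Finset.sum_mul]
  rw [Finset.sum_comm]

lemma G1' (U : Matrix (Fin M') (Fin N') ℝ) (V : Matrix (Fin K') (Fin T') ℝ)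
    (X : Matrix (Fin N') (Fin K') ℝ) :
    ∑ i, ∑ s, ((U * X * V) i s) ^ 2
      = ∑ p : Fin N' × Fin K', ∑ q : Fin N' × Fin K',
          ((∑ i, U i p.1 * U i q.1) * (∑ s, V p.2 s * V q.2 s)) * X p.1 p.2 * X q.1 q.2 := by
  have h1 : ∑ i, ∑ s, ((U * X * V) i s) ^ 2
      = ∑ i, ∑ s, ∑ p : Fin N' × Fin K', ∑ q : Fin N' × Fin K',
          (U i p.1 * X p.1 p.2 * V p.2 s) * (U i q.1 * X q.1 q.2 * V q.2 s) := by
    refine Finset.sum_congr rfl fun i _ => Finset.sum_congr rfl fun s _ => ?_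
    rw [entry_expand', sq, Finset.sum_mul_sum]
  rw [h1, sum_swap4']
  refine Finset.sum_congr rfl fun p _ => Finset.sum_congr rfl fun q _ => ?_
  rw [Finset.sum_mul_sum]
  simp only [Finset.sum_mul]
  exact Finset.sum_congr rfl fun i _ => Finset.sum_congr rfl fun s _ => by ring

lemma G3' (U : Matrix (Fin M') (Fin N') ℝ) (V : Matrix (Fin K') (Fin T') ℝ)
    (X : Matrix (Fin N') (Fin K') ℝ) (Y : Matrix (Fin M') (Fin T') ℝ) :
    ∑ i, ∑ s, (U * X * V) i s * Y i s
      = ∑ p : Fin N' × Fin K', (Uᵀ * Y * Vᵀ) p.1 p.2 * X p.1 p.2 := by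
  have h1 : ∑ i, ∑ s, (U * X * V) i s * Y i s
      = ∑ i, ∑ s, ∑ p : Fin N' × Fin K', ∑ q : PUnit.{1},
          U i p.1 * X p.1 p.2 * V p.2 s * Y i s := by
    refine Finset.sum_congr rfl fun i _ => Finset.sum_congr rfl fun s _ => ?_
    rw [entry_expand', Finset.sum_mul]
    simp
  rw [h1, sum_swap4']
  refine Finset.sum_congr rfl fun p _ => ?_
  simp only [Finset.univ_unique, Finset.sum_const, Finset.card_singleton, one_smul]
  simp only [Matrix.mul_apply, Matrix.transpose_apply]
  rw [Finset.sum_mul]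
  simp only [Finset.sum_mul]
  rw [Finset.sum_comm]
  exact Finset.sum_congr rfl fun i _ => Finset.sum_congr rfl fun s _ => by ring

lemma G2' (U : Matrix (Fin M') (Fin N') ℝ) (V : Matrix (Fin K') (Fin T') ℝ)
    (Cm : Matrix (Fin N') (Fin K') ℝ) (p : Fin N' × Fin K') :
    ∑ q : Fin N' × Fin K',
        ((∑ i, U i p.1 * U i q.1) * (∑ s, V p.2 s * V q.2 s)) * Cm q.1 q.2
      = (Uᵀ * U * Cm * (V * Vᵀ)) p.1 p.2 := by
  obtain ⟨n, k⟩ := p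
  rw [Fintype.sum_prod_type]
  simp only [Matrix.mul_apply, Matrix.transpose_apply]
  simp only [Finset.sum_mul]
  rw [Finset.sum_comm]
  refine Finset.sum_congr rfl fun k' _ => Finset.sum_congr rfl fun n' _ =>
    Finset.sum_congr rfl fun i _ => ?_
  have hV : ∑ s, V k s * V k' s = ∑ s, V k' s * V k s :=
    Finset.sum_congr rfl fun s _ => mul_comm _ _
  rw [hV]
  ring

lemma G4' (W Yy : Matrix (Fin M') (Fin T') ℝ) :
    ∑ i, ∑ s, (W i s - Yy i s) ^ 2
      = (∑ i, ∑ s, (W i s) ^ 2) - 2 * (∑ i, ∑ s, W i s * Yy i s)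
        + ∑ i, ∑ s, (Yy i s) ^ 2 := by
  have h : ∀ (i : Fin M') (s : Fin T'), (W i s - Yy i s) ^ 2
      = (W i s) ^ 2 - 2 * (W i s * Yy i s) + (Yy i s) ^ 2 := fun i s => by ring
  simp_rw [h, Finset.sum_add_distrib, Finset.sum_sub_distrib, Finset.mul_sum]

/-- Generic multiplicative-update step decreases the regularised least-squares
objective (with optional extra separable quadratic majorant given by `Dm`, `Em`). -/
lemma step_main' (U : Matrix (Fin M') (Fin N') ℝ) (V : Matrix (Fin K') (Fin T') ℝ)
    (Yy : Matrix (Fin M') (Fin T') ℝ)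
    (hU : ∀ i j, 0 ≤ U i j) (hV : ∀ i j, 0 ≤ V i j)
    (lam mu : ℝ) (hlam : 0 ≤ lam)
    (Cm Xm Dm Em : Matrix (Fin N') (Fin K') ℝ) (hc : ∀ n k, 0 < Cm n k)
    (hden : ∀ n k, 0 < (Uᵀ * U * Cm * (V * Vᵀ)) n k + mu * Cm n k + lam
        + Dm n k * Cm n k)
    (hX : ∀ n k, Xm n k = Cm n k * ((Uᵀ * Yy * Vᵀ) n k + Em n k)
        / ((Uᵀ * U * Cm * (V * Vᵀ)) n k + mu * Cm n k + lam + Dm n k * Cm n k)) :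
    (1/2) * (∑ i, ∑ s, ((U * Xm * V) i s - Yy i s) ^ 2) + lam * ∑ n, ∑ k, |Xm n k|
      + (mu/2) * ∑ n, ∑ k, (Xm n k) ^ 2
      + (1/2) * (∑ n, ∑ k, Dm n k * (Xm n k) ^ 2) - ∑ n, ∑ k, Em n k * Xm n k
    ≤ (1/2) * (∑ i, ∑ s, ((U * Cm * V) i s - Yy i s) ^ 2) + lam * ∑ n, ∑ k, |Cm n k|
      + (mu/2) * ∑ n, ∑ k, (Cm n k) ^ 2
      + (1/2) * (∑ n, ∑ k, Dm n k * (Cm n k) ^ 2) - ∑ n, ∑ k, Em n k * Cm n k := by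
  have key := mm_step' (ι := Fin N' × Fin K')
    (fun p q => (∑ i, U i p.1 * U i q.1) * (∑ s, V p.2 s * V q.2 s))
    (fun p q => by
      rw [show (∑ i, U i p.1 * U i q.1) = ∑ i, U i q.1 * U i p.1 from
        Finset.sum_congr rfl fun i _ => mul_comm _ _,
        show (∑ s, V p.2 s * V q.2 s) = ∑ s, V q.2 s * V p.2 s from
        Finset.sum_congr rfl fun s _ => mul_comm _ _])
    (fun p q => mul_nonneg
      (Finset.sum_nonneg fun i _ => mul_nonneg (hU _ _) (hU _ _))
      (Finset.sum_nonneg fun s _ => mul_nonneg (hV _ _) (hV _ _)))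
    (fun p => Cm p.1 p.2) (fun p => Xm p.1 p.2)
    (fun p => (Uᵀ * Yy * Vᵀ) p.1 p.2) (fun p => Em p.1 p.2) (fun p => Dm p.1 p.2)
    (fun p => hc p.1 p.2) lam mu hlam
    (fun p => by rw [G2' U V Cm p]; exact hden p.1 p.2)
    (fun p => by rw [G2' U V Cm p]; exact hX p.1 p.2)
  have eq1x := (G1' U V Xm).symm
  have eq1c := (G1' U V Cm).symm
  have eq3x := (G3' U V Xm Yy).symm
  have eq3c := (G3' U V Cm Yy).symm
  have eq4x := G4' (U * Xm * V) Yy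
  have eq4c := G4' (U * Cm * V) Yy
  have eq5x : ∑ p : Fin N' × Fin K', |Xm p.1 p.2| = ∑ n, ∑ k, |Xm n k| := by
    rw [Fintype.sum_prod_type]
  have eq5c : ∑ p : Fin N' × Fin K', |Cm p.1 p.2| = ∑ n, ∑ k, |Cm n k| := by
    rw [Fintype.sum_prod_type]
  have eq6x : ∑ p : Fin N' × Fin K', (Xm p.1 p.2) ^ 2 = ∑ n, ∑ k, (Xm n k) ^ 2 := by
    rw [Fintype.sum_prod_type]
  have eq6c : ∑ p : Fin N' × Fin K', (Cm p.1 p.2) ^ 2 = ∑ n, ∑ k, (Cm n k) ^ 2 := by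
    rw [Fintype.sum_prod_type]
  have eq7x : ∑ p : Fin N' × Fin K', Dm p.1 p.2 * (Xm p.1 p.2) ^ 2
      = ∑ n, ∑ k, Dm n k * (Xm n k) ^ 2 := by
    rw [Fintype.sum_prod_type]
  have eq7c : ∑ p : Fin N' × Fin K', Dm p.1 p.2 * (Cm p.1 p.2) ^ 2
      = ∑ n, ∑ k, Dm n k * (Cm n k) ^ 2 := by
    rw [Fintype.sum_prod_type]
  have eq8x : ∑ p : Fin N' × Fin K', Em p.1 p.2 * Xm p.1 p.2
      = ∑ n, ∑ k, Em n k * Xm n k := by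
    rw [Fintype.sum_prod_type]
  have eq8c : ∑ p : Fin N' × Fin K', Em p.1 p.2 * Cm p.1 p.2
      = ∑ n, ∑ k, Em n k * Cm n k := by
    rw [Fintype.sum_prod_type]
  rw [eq4x, eq4c]
  rw [← eq1x, ← eq1c, ← eq3x, ← eq3c, ← eq5x, ← eq5c, ← eq6x, ← eq6c,
    ← eq7x, ← eq7c, ← eq8x, ← eq8c]
  linarith [key]

end auxiliary
section tv
variable (N K : ℕ) (ε : ℝ) (nbr : Fin N → Finset (Fin N))

lemma gradAbs_pos (hε : 0 < ε) (B : Matrix (Fin N) (Fin K) ℝ) (n : Fin N) (k : Fin K) :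
    0 < gradAbs N K ε nbr B n k := by
  apply Real.sqrt_pos.mpr
  have h1 : (0:ℝ) ≤ ∑ ℓ ∈ nbr n, (B n k - B ℓ k) ^ 2 :=
    Finset.sum_nonneg fun ℓ _ => sq_nonneg _
  positivity

lemma Pmat_pos (hε : 0 < ε) (hnbr : ∀ n, (nbr n).Nonempty)
    (B : Matrix (Fin N) (Fin K) ℝ) (n : Fin N) (k : Fin K) :
    0 < Pmat N K ε nbr B n k := by
  unfold Pmat
  have hg := gradAbs_pos N K ε nbr hε B n k
  have h1 : (0:ℝ) < ∑ _ℓ ∈ nbr n, (1:ℝ) := by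
    rw [Finset.sum_const, nsmul_eq_mul, mul_one]
    exact_mod_cast Finset.card_pos.mpr (hnbr n)
  have h2 : (0:ℝ) ≤ ∑ ℓ ∈ Finset.univ.filter (fun ℓ => n ∈ nbr ℓ),
      1 / gradAbs N K ε nbr B ℓ k :=
    Finset.sum_nonneg fun ℓ _ => by
      have := gradAbs_pos N K ε nbr hε B ℓ k
      positivity
  have h3 : 0 < (1 / gradAbs N K ε nbr B n k) * (∑ _ℓ ∈ nbr n, (1:ℝ)) := by positivity
  linarith

lemma PZ_eq (hε : 0 < ε) (hnbr : ∀ n, (nbr n).Nonempty)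
    (B : Matrix (Fin N) (Fin K) ℝ) (n : Fin N) (k : Fin K) :
    Pmat N K ε nbr B n k * Zmat N K ε nbr B n k
      = (1 / gradAbs N K ε nbr B n k) * (∑ ℓ ∈ nbr n, (B n k + B ℓ k) / 2)
        + ∑ ℓ ∈ Finset.univ.filter (fun ℓ => n ∈ nbr ℓ),
            (B n k + B ℓ k) / (2 * gradAbs N K ε nbr B ℓ k) := by
  have hP := Pmat_pos N K ε nbr hε hnbr B n k
  unfold Zmat
  field_simp

lemma sqrt_tangent {u v : ℝ} (hu : 0 ≤ u) (hv : 0 < v) :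
    Real.sqrt u ≤ Real.sqrt v + (u - v) / (2 * Real.sqrt v) := by
  have hg : 0 < Real.sqrt v := Real.sqrt_pos.mpr hv
  have hg2 : Real.sqrt v ^ 2 = v := Real.sq_sqrt hv.le
  have h2 : Real.sqrt u ^ 2 = u := Real.sq_sqrt hu
  have key : 2 * Real.sqrt v * Real.sqrt u ≤ u + v := by
    nlinarith [sq_nonneg (Real.sqrt u - Real.sqrt v)]
  have h3 : Real.sqrt v + (u - v) / (2 * Real.sqrt v) = (u + v) / (2 * Real.sqrt v) := by
    field_simp
    nlinarith [hg2]
  rw [h3, le_div_iff₀ (by positivity)]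
  nlinarith [key]

lemma adj_swap (f : Fin N → Fin N → ℝ) :
    ∑ n, ∑ ℓ ∈ nbr n, f n ℓ
      = ∑ n, ∑ ℓ ∈ Finset.univ.filter (fun ℓ => n ∈ nbr ℓ), f ℓ n := by
  have h1 : ∀ n, ∑ ℓ ∈ nbr n, f n ℓ = ∑ ℓ, if ℓ ∈ nbr n then f n ℓ else 0 := by
    intro n
    rw [Finset.sum_ite_mem, Finset.univ_inter]
  have h2 : ∀ n, ∑ ℓ ∈ Finset.univ.filter (fun ℓ => n ∈ nbr ℓ), f ℓ n
      = ∑ ℓ, if n ∈ nbr ℓ then f ℓ n else 0 := by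
    intro n
    rw [Finset.sum_filter]
  simp_rw [h1, h2]
  exact Finset.sum_comm

lemma tv_bound (hε : 0 < ε) (hnbr : ∀ n, (nbr n).Nonempty)
    (B X : Matrix (Fin N) (Fin K) ℝ) :
    smoothTV N K ε nbr X - smoothTV N K ε nbr B ≤
      ∑ k, ∑ n, (Pmat N K ε nbr B n k * ((X n k) ^ 2 - (B n k) ^ 2)
        - 2 * (Pmat N K ε nbr B n k * Zmat N K ε nbr B n k) * (X n k - B n k)) := by
  set g : Fin N → Fin K → ℝ := fun n k => gradAbs N K ε nbr B n k with hgdef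
  have hg : ∀ n k, 0 < g n k := fun n k => gradAbs_pos N K ε nbr hε B n k
  -- step 1 : tangent bound entrywise
  have step1 : ∀ n k, gradAbs N K ε nbr X n k - g n k ≤
      (∑ ℓ ∈ nbr n, ((X n k - X ℓ k) ^ 2 - (B n k - B ℓ k) ^ 2)) / (2 * g n k) := by
    intro n k
    have hu : (0:ℝ) ≤ ε ^ 2 + ∑ ℓ ∈ nbr n, (X n k - X ℓ k) ^ 2 := by
      have : (0:ℝ) ≤ ∑ ℓ ∈ nbr n, (X n k - X ℓ k) ^ 2 :=
        Finset.sum_nonneg fun ℓ _ => sq_nonneg _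
      positivity
    have hv : (0:ℝ) < ε ^ 2 + ∑ ℓ ∈ nbr n, (B n k - B ℓ k) ^ 2 := by
      have : (0:ℝ) ≤ ∑ ℓ ∈ nbr n, (B n k - B ℓ k) ^ 2 :=
        Finset.sum_nonneg fun ℓ _ => sq_nonneg _
      positivity
    have := sqrt_tangent hu hv
    have hdiff : (ε ^ 2 + ∑ ℓ ∈ nbr n, (X n k - X ℓ k) ^ 2)
        - (ε ^ 2 + ∑ ℓ ∈ nbr n, (B n k - B ℓ k) ^ 2)
        = ∑ ℓ ∈ nbr n, ((X n k - X ℓ k) ^ 2 - (B n k - B ℓ k) ^ 2) := by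
      rw [Finset.sum_sub_distrib]
      ring
    unfold gradAbs
    rw [← hdiff]
    have hgeq : g n k = Real.sqrt (ε ^ 2 + ∑ ℓ ∈ nbr n, (B n k - B ℓ k) ^ 2) := rfl
    rw [hgeq]
    linarith [this]
  -- step 2 : quadratic separation entrywise
  have step2 : ∀ (n : Fin N) (k : Fin K) (ℓ : Fin N),
      (X n k - X ℓ k) ^ 2 - (B n k - B ℓ k) ^ 2 ≤
        2 * ((X n k - (B n k + B ℓ k) / 2) ^ 2 + (X ℓ k - (B n k + B ℓ k) / 2) ^ 2)
        - 2 * ((B n k - (B n k + B ℓ k) / 2) ^ 2 + (B ℓ k - (B n k + B ℓ k) / 2) ^ 2) := by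
    intro n k ℓ
    nlinarith [sq_nonneg (X n k + X ℓ k - B n k - B ℓ k)]
  -- step 3 : combine
  have step3 : ∀ n k, gradAbs N K ε nbr X n k - g n k ≤
      (1 / g n k) * ∑ ℓ ∈ nbr n,
        ((((X n k - (B n k + B ℓ k)/2) ^ 2 + (X ℓ k - (B n k + B ℓ k)/2) ^ 2)
          - ((B n k - (B n k + B ℓ k)/2) ^ 2 + (B ℓ k - (B n k + B ℓ k)/2) ^ 2))) := by
    intro n k
    have h1 := step1 n k
    have h2 : ∑ ℓ ∈ nbr n, ((X n k - X ℓ k) ^ 2 - (B n k - B ℓ k) ^ 2)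
        ≤ ∑ ℓ ∈ nbr n,
          (2 * ((X n k - (B n k + B ℓ k)/2) ^ 2 + (X ℓ k - (B n k + B ℓ k)/2) ^ 2)
          - 2 * ((B n k - (B n k + B ℓ k)/2) ^ 2 + (B ℓ k - (B n k + B ℓ k)/2) ^ 2)) :=
      Finset.sum_le_sum fun ℓ _ => step2 n k ℓ
    have hgnk := hg n k
    have h3 : (∑ ℓ ∈ nbr n,
          (2 * ((X n k - (B n k + B ℓ k)/2) ^ 2 + (X ℓ k - (B n k + B ℓ k)/2) ^ 2)
          - 2 * ((B n k - (B n k + B ℓ k)/2) ^ 2 + (B ℓ k - (B n k + B ℓ k)/2) ^ 2)))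
          / (2 * g n k)
        = (1 / g n k) * ∑ ℓ ∈ nbr n,
          ((((X n k - (B n k + B ℓ k)/2) ^ 2 + (X ℓ k - (B n k + B ℓ k)/2) ^ 2)
          - ((B n k - (B n k + B ℓ k)/2) ^ 2 + (B ℓ k - (B n k + B ℓ k)/2) ^ 2))) := by
      rw [Finset.mul_sum, Finset.sum_div]
      refine Finset.sum_congr rfl fun ℓ _ => ?_
      field_simp
    have h4 := (div_le_div_iff_of_pos_right (show (0:ℝ) < 2 * g n k by positivity)).mpr h2
    calc gradAbs N K ε nbr X n k - g n k
        ≤ (∑ ℓ ∈ nbr n, ((X n k - X ℓ k) ^ 2 - (B n k - B ℓ k) ^ 2)) / (2 * g n k) := h1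
      _ ≤ _ := h4.trans_eq h3
  -- per-column identity
  have percol : ∀ k : Fin K,
      ∑ n, (1 / g n k) * ∑ ℓ ∈ nbr n,
        ((((X n k - (B n k + B ℓ k)/2) ^ 2 + (X ℓ k - (B n k + B ℓ k)/2) ^ 2)
          - ((B n k - (B n k + B ℓ k)/2) ^ 2 + (B ℓ k - (B n k + B ℓ k)/2) ^ 2)))
      = ∑ n, (Pmat N K ε nbr B n k * ((X n k) ^ 2 - (B n k) ^ 2)
          - 2 * (Pmat N K ε nbr B n k * Zmat N K ε nbr B n k) * (X n k - B n k)) := by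
    intro k
    -- split the inner sum in two pieces
    have hsplit : ∀ n : Fin N, (1 / g n k) * ∑ ℓ ∈ nbr n,
        ((((X n k - (B n k + B ℓ k)/2) ^ 2 + (X ℓ k - (B n k + B ℓ k)/2) ^ 2)
          - ((B n k - (B n k + B ℓ k)/2) ^ 2 + (B ℓ k - (B n k + B ℓ k)/2) ^ 2)))
      = ((1 / g n k) * ∑ ℓ ∈ nbr n,
            ((X n k - (B n k + B ℓ k)/2) ^ 2 - (B n k - (B n k + B ℓ k)/2) ^ 2))
        + ((1 / g n k) * ∑ ℓ ∈ nbr n,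
            ((X ℓ k - (B n k + B ℓ k)/2) ^ 2 - (B ℓ k - (B n k + B ℓ k)/2) ^ 2)) := by
      intro n
      rw [Finset.mul_sum, Finset.mul_sum, Finset.mul_sum, ← Finset.sum_add_distrib]
      exact Finset.sum_congr rfl fun ℓ _ => by ring
    simp_rw [hsplit, Finset.sum_add_distrib]
    -- reindex the second piece via the adjoint neighbourhoods
    have hadj : ∑ n, (1 / g n k) * ∑ ℓ ∈ nbr n,
          ((X ℓ k - (B n k + B ℓ k)/2) ^ 2 - (B ℓ k - (B n k + B ℓ k)/2) ^ 2)
        = ∑ n, ∑ ℓ ∈ Finset.univ.filter (fun ℓ => n ∈ nbr ℓ),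
            (1 / g ℓ k) * ((X n k - (B ℓ k + B n k)/2) ^ 2
              - (B n k - (B ℓ k + B n k)/2) ^ 2) := by
      have := adj_swap N nbr (fun n ℓ => (1 / g n k) *
          ((X ℓ k - (B n k + B ℓ k)/2) ^ 2 - (B ℓ k - (B n k + B ℓ k)/2) ^ 2))
      simp_rw [Finset.mul_sum] at this ⊢
      exact this
    rw [hadj, ← Finset.sum_add_distrib]
    refine Finset.sum_congr rfl fun n _ => ?_
    -- now a fixed (n,k) computation
    rw [PZ_eq N K ε nbr hε hnbr B n k]
    show _ = Pmat N K ε nbr B n k * _ - _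
    unfold Pmat
    have e1 : (1 / g n k) * ∑ ℓ ∈ nbr n,
          ((X n k - (B n k + B ℓ k)/2) ^ 2 - (B n k - (B n k + B ℓ k)/2) ^ 2)
        = ((1 / g n k) * ∑ _ℓ ∈ nbr n, (1:ℝ)) * ((X n k) ^ 2 - (B n k) ^ 2)
          - 2 * ((1 / g n k) * ∑ ℓ ∈ nbr n, (B n k + B ℓ k)/2) * (X n k - B n k) := by
      simp only [Finset.mul_sum, Finset.sum_mul, Finset.mul_sum]
      rw [← Finset.sum_sub_distrib]
      exact Finset.sum_congr rfl fun ℓ _ => by ring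
    have e2 : ∑ ℓ ∈ Finset.univ.filter (fun ℓ => n ∈ nbr ℓ),
          (1 / g ℓ k) * ((X n k - (B ℓ k + B n k)/2) ^ 2
            - (B n k - (B ℓ k + B n k)/2) ^ 2)
        = (∑ ℓ ∈ Finset.univ.filter (fun ℓ => n ∈ nbr ℓ), 1 / g ℓ k)
            * ((X n k) ^ 2 - (B n k) ^ 2)
          - 2 * (∑ ℓ ∈ Finset.univ.filter (fun ℓ => n ∈ nbr ℓ),
              (B n k + B ℓ k) / (2 * g ℓ k)) * (X n k - B n k) := by
      simp only [Finset.sum_mul, Finset.mul_sum]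
      rw [← Finset.sum_sub_distrib]
      refine Finset.sum_congr rfl fun ℓ hℓ => ?_
      have := hg ℓ k
      field_simp
      ring
    rw [e1, e2]
    ring
  -- conclude
  have main : smoothTV N K ε nbr X - smoothTV N K ε nbr B
      ≤ ∑ k, ∑ n, (1 / g n k) * ∑ ℓ ∈ nbr n,
        ((((X n k - (B n k + B ℓ k)/2) ^ 2 + (X ℓ k - (B n k + B ℓ k)/2) ^ 2)
          - ((B n k - (B n k + B ℓ k)/2) ^ 2 + (B ℓ k - (B n k + B ℓ k)/2) ^ 2))) := by
    unfold smoothTV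
    rw [← Finset.sum_sub_distrib]
    refine Finset.sum_le_sum fun k _ => ?_
    rw [← Finset.sum_sub_distrib]
    exact Finset.sum_le_sum fun n _ => step3 n k
  refine main.trans ?_
  exact le_of_eq (Finset.sum_congr rfl fun k _ => percol k)
end tv

/-- **Algorithm for the stationary model `sBC` (Corollary 2.4 of the paper).**
The multiplicative updates for `B` and `C` lead to a monotonic decrease of the
`sBC` cost function, provided every entry of the two denominator matrices is
strictly positive. -/
theorem sBC_update_decreases_cost
    (M N K T : ℕ)
    (ε : ℝ) (hε : 0 < ε)
    (nbr : Fin N → Finset (Fin N)) (hnbr : ∀ n, (nbr n).Nonempty)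
    (A : Matrix (Fin M) (Fin N) ℝ) (hA : ∀ m n, 0 ≤ A m n)
    (Y : Matrix (Fin M) (Fin T) ℝ) (hY : ∀ m t, 0 ≤ Y m t)
    (lamB muB lamC muC τ : ℝ)
    (hlamB : 0 ≤ lamB) (hmuB : 0 ≤ muB) (hlamC : 0 ≤ lamC) (hmuC : 0 ≤ muC) (hτ : 0 ≤ τ)
    (B : Matrix (Fin N) (Fin K) ℝ) (hB : ∀ n k, 0 < B n k)
    (C : Matrix (Fin K) (Fin T) ℝ) (hC : ∀ k t, 0 < C k t)
    (hdenB : ∀ n k,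
      0 < (Aᵀ * A * B * C * Cᵀ) n k + muB * B n k + lamB
            + τ * B n k * Pmat N K ε nbr B n k)
    (Bp : Matrix (Fin N) (Fin K) ℝ)
    (hBp : ∀ n k, Bp n k =
      B n k * ((Aᵀ * Y * Cᵀ) n k
                + τ * Pmat N K ε nbr B n k * Zmat N K ε nbr B n k)
        / ((Aᵀ * A * B * C * Cᵀ) n k + muB * B n k + lamB
            + τ * B n k * Pmat N K ε nbr B n k))
    (hdenC : ∀ k t,
      0 < (Bpᵀ * Aᵀ * A * Bp * C) k t + muC * C k t + lamC)
    (Cp : Matrix (Fin K) (Fin T) ℝ)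
    (hCp : ∀ k t, Cp k t =
      C k t * (Bpᵀ * Aᵀ * Y) k t
        / ((Bpᵀ * Aᵀ * A * Bp * C) k t + muC * C k t + lamC)) :
    costSBC M N K T A Y lamB muB lamC muC τ ε nbr Bp Cp
      ≤ costSBC M N K T A Y lamB muB lamC muC τ ε nbr B C := by
  -- nonnegativity facts
  have hZnn : ∀ n k, 0 ≤ Zmat N K ε nbr B n k := by
    intro n k
    have hP := Pmat_pos N K ε nbr hε hnbr B n k
    have hg := gradAbs_pos N K ε nbr hε B n k
    unfold Zmat
    refine mul_nonneg (by positivity) (add_nonneg (mul_nonneg (by positivity) ?_) ?_)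
    · exact Finset.sum_nonneg fun ℓ _ => by
        have := hB n k; have := hB ℓ k; positivity
    · exact Finset.sum_nonneg fun ℓ _ => by
        have := hB n k; have := hB ℓ k
        have := gradAbs_pos N K ε nbr hε B ℓ k
        positivity
  have hAYC : ∀ n k, 0 ≤ (Aᵀ * Y * Cᵀ) n k := by
    intro n k
    rw [Matrix.mul_apply]
    refine Finset.sum_nonneg fun t _ => mul_nonneg ?_ ?_
    · rw [Matrix.mul_apply]
      exact Finset.sum_nonneg fun m _ => mul_nonneg
        (by rw [Matrix.transpose_apply]; exact hA m n) (hY m t)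
    · rw [Matrix.transpose_apply]; exact (hC k t).le
  have hBpnn : ∀ n k, 0 ≤ Bp n k := by
    intro n k
    rw [hBp n k]
    refine div_nonneg (mul_nonneg (hB n k).le (add_nonneg (hAYC n k) ?_)) (hdenB n k).le
    exact mul_nonneg (mul_nonneg hτ (Pmat_pos N K ε nbr hε hnbr B n k).le) (hZnn n k)
  have hABp : ∀ i j, 0 ≤ (A * Bp) i j := by
    intro i j
    rw [Matrix.mul_apply]
    exact Finset.sum_nonneg fun n _ => mul_nonneg (hA i n) (hBpnn n j)
  -- B-step
  have eassoc : Aᵀ * A * B * (C * Cᵀ) = Aᵀ * A * B * C * Cᵀ :=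
    (Matrix.mul_assoc _ _ _).symm
  have hstepB := step_main' A C Y hA (fun k t => (hC k t).le) lamB muB hlamB B Bp
    (fun n k => τ * Pmat N K ε nbr B n k)
    (fun n k => τ * Pmat N K ε nbr B n k * Zmat N K ε nbr B n k)
    hB
    (by
      intro n k
      rw [eassoc]
      have e2 : τ * Pmat N K ε nbr B n k * B n k
          = τ * B n k * Pmat N K ε nbr B n k := by ring
      linarith [hdenB n k, e2])
    (by
      intro n k
      rw [eassoc, hBp n k]
      ring)
  -- C-step
  have hone : ∀ i j : Fin T, 0 ≤ (1 : Matrix (Fin T) (Fin T) ℝ) i j := by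
    intro i j
    rw [Matrix.one_apply]
    split <;> norm_num
  have esim : (A * Bp)ᵀ * (A * Bp) * C
        * ((1 : Matrix (Fin T) (Fin T) ℝ) * (1 : Matrix (Fin T) (Fin T) ℝ)ᵀ)
      = Bpᵀ * Aᵀ * A * Bp * C := by
    simp only [Matrix.transpose_mul, Matrix.transpose_one, Matrix.mul_one,
      Matrix.one_mul, Matrix.mul_assoc]
  have esim2 : (A * Bp)ᵀ * Y * (1 : Matrix (Fin T) (Fin T) ℝ)ᵀ = Bpᵀ * Aᵀ * Y := by
    simp only [Matrix.transpose_mul, Matrix.transpose_one, Matrix.mul_one,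
      Matrix.mul_assoc]
  have hstepC := step_main' (A * Bp) (1 : Matrix (Fin T) (Fin T) ℝ) Y hABp hone
    lamC muC hlamC C Cp 0 0 hC
    (by
      intro k t
      rw [esim]
      simp only [Matrix.zero_apply, zero_mul, add_zero]
      exact hdenC k t)
    (by
      intro k t
      rw [esim, esim2]
      simp only [Matrix.zero_apply, zero_mul, add_zero]
      exact hCp k t)
  rw [Matrix.mul_one, Matrix.mul_one] at hstepC
  simp only [Matrix.zero_apply, zero_mul, mul_zero, Finset.sum_const_zero,
    add_zero, sub_zero] at hstepC
  -- TV majorisation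
  have htv := tv_bound N K ε nbr hε hnbr B Bp
  have hτ2 : (0:ℝ) ≤ τ / 2 := div_nonneg hτ (by norm_num)
  have htvm := mul_le_mul_of_nonneg_left htv hτ2
  have hlink : (τ/2) * (∑ k, ∑ n, (Pmat N K ε nbr B n k * ((Bp n k) ^ 2 - (B n k) ^ 2)
        - 2 * (Pmat N K ε nbr B n k * Zmat N K ε nbr B n k) * (Bp n k - B n k)))
      = ((1/2) * (∑ n, ∑ k, τ * Pmat N K ε nbr B n k * Bp n k ^ 2)
          - ∑ n, ∑ k, τ * Pmat N K ε nbr B n k * Zmat N K ε nbr B n k * Bp n k)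
        - ((1/2) * (∑ n, ∑ k, τ * Pmat N K ε nbr B n k * B n k ^ 2)
          - ∑ n, ∑ k, τ * Pmat N K ε nbr B n k * Zmat N K ε nbr B n k * B n k) := by
    have h1 : ∀ (Wm : Matrix (Fin N) (Fin K) ℝ),
        (1/2) * (∑ n, ∑ k, τ * Pmat N K ε nbr B n k * Wm n k ^ 2)
          - ∑ n, ∑ k, τ * Pmat N K ε nbr B n k * Zmat N K ε nbr B n k * Wm n k
        = ∑ k, ∑ n, ((1/2) * (τ * Pmat N K ε nbr B n k * Wm n k ^ 2)
          - τ * Pmat N K ε nbr B n k * Zmat N K ε nbr B n k * Wm n k) := by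
      intro Wm
      rw [Finset.mul_sum]
      simp_rw [Finset.mul_sum]
      rw [← Finset.sum_sub_distrib]
      simp_rw [← Finset.sum_sub_distrib]
      exact Finset.sum_comm
    rw [h1 Bp, h1 B, ← Finset.sum_sub_distrib]
    simp_rw [← Finset.sum_sub_distrib]
    rw [Finset.mul_sum]
    simp_rw [Finset.mul_sum]
    exact Finset.sum_congr rfl fun k _ => Finset.sum_congr rfl fun n _ => by ring
  rw [hlink] at htvm
  -- conclude
  unfold costSBC
  nlinarith [hstepB, hstepC, htvm, mul_sub (τ/2) (smoothTV N K ε nbr Bp) (smoothTV N K ε nbr B)]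
end

section
/- (Explicit surrogate inequality for the smoothed isotropic total variation.) With TV, P, Z defined as in the context (ε_TV > 0, every 𝒩_n nonempty), for all matrices B, B̃ ∈ ℝ^{N×K} one has TV(B) ≤ TV(B̃) + Σ_{k=1}^K Σ_{n=1}^N P(B̃)_{nk}·[(B_{nk} − Z(B̃)_{nk})² − (B̃_{nk} − Z(B̃)_{nk})²]. In particular, Q(B, B̃) := (τ/2)Σ_{n,k} P(B̃)_{nk}(B_{nk} − Z(B̃)_{nk})² + (τ/2)TV(B̃) − (τ/2)Σ_{n,k} P(B̃)_{nk}(B̃_{nk} − Z(B̃)_{nk})² is, for any τ ≥ 0, a surrogate function of (τ/2)TV: it majorises (τ/2)TV(B) for all B and equals (τ/2)TV(B̃) at B = B̃. -/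
open Matrix BigOperators

lemma aux_sqrt {a b : ℝ} (ha : 0 ≤ a) (hb : 0 < b) :
    Real.sqrt a ≤ Real.sqrt b + (a - b) / (2 * Real.sqrt b) := by
  have hsb : 0 < Real.sqrt b := Real.sqrt_pos.2 hb
  have h1 : Real.sqrt a ^ 2 = a := Real.sq_sqrt ha
  have h2 : Real.sqrt b ^ 2 = b := Real.sq_sqrt hb.le
  have key : Real.sqrt a - Real.sqrt b ≤ (a - b) / (2 * Real.sqrt b) := by
    rw [le_div_iff₀ (by positivity)]
    nlinarith [sq_nonneg (Real.sqrt a - Real.sqrt b)]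
  linarith

lemma aux_quad_sum {α : Type*} (s : Finset α) (w c : α → ℝ) (x y : ℝ) :
    ∑ ℓ ∈ s, ((x - c ℓ) ^ 2 - (y - c ℓ) ^ 2) * w ℓ
      = (∑ ℓ ∈ s, w ℓ) * (x ^ 2 - y ^ 2) - 2 * (x - y) * ∑ ℓ ∈ s, c ℓ * w ℓ := by
  rw [Finset.sum_mul, Finset.mul_sum, ← Finset.sum_sub_distrib]
  exact Finset.sum_congr rfl fun ℓ _ => by ring

lemma aux_swap {N : ℕ} (nbr : Fin N → Finset (Fin N)) (f : Fin N → Fin N → ℝ) :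
    ∑ n, ∑ ℓ ∈ nbr n, f n ℓ
      = ∑ n, ∑ ℓ ∈ Finset.univ.filter (fun ℓ => n ∈ nbr ℓ), f ℓ n := by
  have h1 : ∀ n, ∑ ℓ ∈ nbr n, f n ℓ = ∑ ℓ : Fin N, if ℓ ∈ nbr n then f n ℓ else 0 := by
    intro n; rw [Finset.sum_ite_mem, Finset.univ_inter]
  have h2 : ∀ n, ∑ ℓ ∈ Finset.univ.filter (fun ℓ => n ∈ nbr ℓ), f ℓ n
      = ∑ ℓ : Fin N, if n ∈ nbr ℓ then f ℓ n else 0 := by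
    intro n; rw [Finset.sum_filter]
  simp only [h1, h2]
  exact Finset.sum_comm

section Main

variable {N K : ℕ} {ε : ℝ} {nbr : Fin N → Finset (Fin N)}

lemma aux_gpos (hε : 0 < ε) (X : Matrix (Fin N) (Fin K) ℝ) (n : Fin N) (k : Fin K) :
    0 < gradAbs N K ε nbr X n k := by
  apply Real.sqrt_pos.2
  have h1 : (0:ℝ) ≤ ∑ ℓ ∈ nbr n, (X n k - X ℓ k) ^ 2 :=
    Finset.sum_nonneg fun _ _ => sq_nonneg _
  have h2 : (0:ℝ) < ε ^ 2 := pow_pos hε 2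
  linarith

lemma aux_main (hε : 0 < ε) (hnbr : ∀ n, (nbr n).Nonempty)
    (B Bt : Matrix (Fin N) (Fin K) ℝ) :
    smoothTV N K ε nbr B ≤ smoothTV N K ε nbr Bt
      + ∑ k : Fin K, ∑ n : Fin N, Pmat N K ε nbr Bt n k *
          ((B n k - Zmat N K ε nbr Bt n k) ^ 2
            - (Bt n k - Zmat N K ε nbr Bt n k) ^ 2) := by
  have hg : ∀ n k, 0 < gradAbs N K ε nbr Bt n k := fun n k => aux_gpos hε Bt n k
  set G : Matrix (Fin N) (Fin K) ℝ → ℝ := fun X =>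
    ∑ k : Fin K, ∑ n : Fin N,
      ((∑ ℓ ∈ nbr n, (X n k - (Bt n k + Bt ℓ k) / 2) ^ 2) / gradAbs N K ε nbr Bt n k
        + ∑ ℓ ∈ Finset.univ.filter (fun ℓ => n ∈ nbr ℓ),
            (X n k - (Bt ℓ k + Bt n k) / 2) ^ 2 / gradAbs N K ε nbr Bt ℓ k) with hGdef
  -- Step A : sqrt majorization
  have stepA : smoothTV N K ε nbr B ≤ smoothTV N K ε nbr Bt
      + ∑ k : Fin K, ∑ n : Fin N,
          ((∑ ℓ ∈ nbr n, (B n k - B ℓ k) ^ 2) - ∑ ℓ ∈ nbr n, (Bt n k - Bt ℓ k) ^ 2)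
            / (2 * gradAbs N K ε nbr Bt n k) := by
    rw [smoothTV, smoothTV, ← Finset.sum_add_distrib]
    apply Finset.sum_le_sum; intro k _
    rw [← Finset.sum_add_distrib]
    apply Finset.sum_le_sum; intro n _
    have h := aux_sqrt (a := ε ^ 2 + ∑ ℓ ∈ nbr n, (B n k - B ℓ k) ^ 2)
        (b := ε ^ 2 + ∑ ℓ ∈ nbr n, (Bt n k - Bt ℓ k) ^ 2)
        (by positivity) (by
          have h1 : (0:ℝ) ≤ ∑ ℓ ∈ nbr n, (Bt n k - Bt ℓ k) ^ 2 :=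
            Finset.sum_nonneg fun _ _ => sq_nonneg _
          have h2 : (0:ℝ) < ε ^ 2 := pow_pos hε 2
          linarith)
    have e : (ε ^ 2 + ∑ ℓ ∈ nbr n, (B n k - B ℓ k) ^ 2)
        - (ε ^ 2 + ∑ ℓ ∈ nbr n, (Bt n k - Bt ℓ k) ^ 2)
        = (∑ ℓ ∈ nbr n, (B n k - B ℓ k) ^ 2) - ∑ ℓ ∈ nbr n, (Bt n k - Bt ℓ k) ^ 2 := by
      ring
    rw [e] at h
    simpa [gradAbs] using h
  -- Step B : convexity bound
  have stepB : ∀ X : Matrix (Fin N) (Fin K) ℝ,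
      ∑ k : Fin K, ∑ n : Fin N,
          (∑ ℓ ∈ nbr n, (X n k - X ℓ k) ^ 2) / (2 * gradAbs N K ε nbr Bt n k) ≤ G X := by
    intro X
    rw [hGdef]
    apply Finset.sum_le_sum; intro k _
    have hsw := aux_swap nbr
      (fun n ℓ => (X ℓ k - (Bt n k + Bt ℓ k) / 2) ^ 2 / gradAbs N K ε nbr Bt n k)
    rw [Finset.sum_add_distrib, ← hsw, ← Finset.sum_add_distrib]
    apply Finset.sum_le_sum; intro n _
    rw [Finset.sum_div, Finset.sum_div, ← Finset.sum_add_distrib]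
    apply Finset.sum_le_sum; intro ℓ _
    have hgnk := hg n k
    rw [← add_div, div_le_div_iff₀ (by linarith) hgnk]
    nlinarith [mul_nonneg (sq_nonneg (X n k + X ℓ k - Bt n k - Bt ℓ k)) hgnk.le]
  -- Step C : equality at Bt
  have stepC : ∑ k : Fin K, ∑ n : Fin N,
      (∑ ℓ ∈ nbr n, (Bt n k - Bt ℓ k) ^ 2) / (2 * gradAbs N K ε nbr Bt n k) = G Bt := by
    rw [hGdef]
    apply Finset.sum_congr rfl; intro k _
    have hsw := aux_swap nbr
      (fun n ℓ => (Bt ℓ k - (Bt n k + Bt ℓ k) / 2) ^ 2 / gradAbs N K ε nbr Bt n k)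
    rw [Finset.sum_add_distrib, ← hsw, ← Finset.sum_add_distrib]
    apply Finset.sum_congr rfl; intro n _
    rw [Finset.sum_div, Finset.sum_div, ← Finset.sum_add_distrib]
    apply Finset.sum_congr rfl; intro ℓ _
    have hgnk := (hg n k).ne'
    field_simp
    ring
  -- positivity of P
  have hP : ∀ n k, 0 < Pmat N K ε nbr Bt n k := by
    intro n k
    rw [Pmat]
    have h1 : 0 < (1 / gradAbs N K ε nbr Bt n k) * (∑ _ℓ ∈ nbr n, (1:ℝ)) := by
      apply mul_pos (one_div_pos.2 (hg n k))
      rw [Finset.sum_const, nsmul_eq_mul, mul_one]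
      exact_mod_cast Finset.card_pos.2 (hnbr n)
    have h2 : (0:ℝ) ≤ ∑ ℓ ∈ Finset.univ.filter (fun ℓ => n ∈ nbr ℓ),
        1 / gradAbs N K ε nbr Bt ℓ k :=
      Finset.sum_nonneg fun ℓ _ => (one_div_pos.2 (hg ℓ k)).le
    linarith
  -- Step D : per-entry quadratic identity
  have stepD : ∀ (n : Fin N) (k : Fin K),
      ((∑ ℓ ∈ nbr n, (B n k - (Bt n k + Bt ℓ k) / 2) ^ 2) / gradAbs N K ε nbr Bt n k
        + ∑ ℓ ∈ Finset.univ.filter (fun ℓ => n ∈ nbr ℓ),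
            (B n k - (Bt ℓ k + Bt n k) / 2) ^ 2 / gradAbs N K ε nbr Bt ℓ k)
      - ((∑ ℓ ∈ nbr n, (Bt n k - (Bt n k + Bt ℓ k) / 2) ^ 2) / gradAbs N K ε nbr Bt n k
        + ∑ ℓ ∈ Finset.univ.filter (fun ℓ => n ∈ nbr ℓ),
            (Bt n k - (Bt ℓ k + Bt n k) / 2) ^ 2 / gradAbs N K ε nbr Bt ℓ k)
      = Pmat N K ε nbr Bt n k *
          ((B n k - Zmat N K ε nbr Bt n k) ^ 2
            - (Bt n k - Zmat N K ε nbr Bt n k) ^ 2) := by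
    intro n k
    have hPnk := (hP n k).ne'
    have e1 : (∑ ℓ ∈ nbr n, (B n k - (Bt n k + Bt ℓ k) / 2) ^ 2)
          / gradAbs N K ε nbr Bt n k
        - (∑ ℓ ∈ nbr n, (Bt n k - (Bt n k + Bt ℓ k) / 2) ^ 2)
          / gradAbs N K ε nbr Bt n k
        = (∑ ℓ ∈ nbr n, 1 / gradAbs N K ε nbr Bt n k) * (B n k ^ 2 - Bt n k ^ 2)
          - 2 * (B n k - Bt n k) *
              ∑ ℓ ∈ nbr n, ((Bt n k + Bt ℓ k) / 2) * (1 / gradAbs N K ε nbr Bt n k) := by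
      rw [div_sub_div_same, ← Finset.sum_sub_distrib, ← aux_quad_sum, Finset.sum_div]
      exact Finset.sum_congr rfl fun ℓ _ => div_eq_mul_one_div _ _
    have e2 : (∑ ℓ ∈ Finset.univ.filter (fun ℓ => n ∈ nbr ℓ),
            (B n k - (Bt ℓ k + Bt n k) / 2) ^ 2 / gradAbs N K ε nbr Bt ℓ k)
        - ∑ ℓ ∈ Finset.univ.filter (fun ℓ => n ∈ nbr ℓ),
            (Bt n k - (Bt ℓ k + Bt n k) / 2) ^ 2 / gradAbs N K ε nbr Bt ℓ k
        = (∑ ℓ ∈ Finset.univ.filter (fun ℓ => n ∈ nbr ℓ),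
              1 / gradAbs N K ε nbr Bt ℓ k) * (B n k ^ 2 - Bt n k ^ 2)
          - 2 * (B n k - Bt n k) *
              ∑ ℓ ∈ Finset.univ.filter (fun ℓ => n ∈ nbr ℓ),
                ((Bt ℓ k + Bt n k) / 2) * (1 / gradAbs N K ε nbr Bt ℓ k) := by
      rw [← Finset.sum_sub_distrib, ← aux_quad_sum]
      exact Finset.sum_congr rfl fun ℓ _ => by ring
    have eP : Pmat N K ε nbr Bt n k
        = (∑ ℓ ∈ nbr n, 1 / gradAbs N K ε nbr Bt n k)
          + ∑ ℓ ∈ Finset.univ.filter (fun ℓ => n ∈ nbr ℓ),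
              1 / gradAbs N K ε nbr Bt ℓ k := by
      rw [Pmat, Finset.sum_const, Finset.sum_const, nsmul_eq_mul, nsmul_eq_mul, mul_one]
      ring
    have eD : Pmat N K ε nbr Bt n k * Zmat N K ε nbr Bt n k
        = (∑ ℓ ∈ nbr n, ((Bt n k + Bt ℓ k) / 2) * (1 / gradAbs N K ε nbr Bt n k))
          + ∑ ℓ ∈ Finset.univ.filter (fun ℓ => n ∈ nbr ℓ),
              ((Bt ℓ k + Bt n k) / 2) * (1 / gradAbs N K ε nbr Bt ℓ k) := by
      have hE : (1 / gradAbs N K ε nbr Bt n k) * (∑ ℓ ∈ nbr n, (Bt n k + Bt ℓ k) / 2)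
            + ∑ ℓ ∈ Finset.univ.filter (fun ℓ => n ∈ nbr ℓ),
                (Bt n k + Bt ℓ k) / (2 * gradAbs N K ε nbr Bt ℓ k)
          = (∑ ℓ ∈ nbr n, ((Bt n k + Bt ℓ k) / 2) * (1 / gradAbs N K ε nbr Bt n k))
            + ∑ ℓ ∈ Finset.univ.filter (fun ℓ => n ∈ nbr ℓ),
                ((Bt ℓ k + Bt n k) / 2) * (1 / gradAbs N K ε nbr Bt ℓ k) := by
        rw [Finset.mul_sum]
        congr 1
        · exact Finset.sum_congr rfl fun ℓ _ => by ring
        · refine Finset.sum_congr rfl fun ℓ _ => ?_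
          have := (hg ℓ k).ne'
          field_simp
          ring
      rw [Zmat, ← mul_assoc, mul_one_div, div_self hPnk, one_mul, hE]
    have split : ∀ a b a' b' : ℝ, (a + b) - (a' + b') = (a - a') + (b - b') := by
      intro a b a' b'; ring
    rw [split, e1, e2]
    linear_combination (-(B n k ^ 2 - Bt n k ^ 2)) * eP
      + (2 * (B n k - Bt n k)) * eD
  -- assemble
  have stepDsum : G B - G Bt
      = ∑ k : Fin K, ∑ n : Fin N, Pmat N K ε nbr Bt n k *
          ((B n k - Zmat N K ε nbr Bt n k) ^ 2
            - (Bt n k - Zmat N K ε nbr Bt n k) ^ 2) := by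
    rw [hGdef]
    rw [← Finset.sum_sub_distrib]
    apply Finset.sum_congr rfl; intro k _
    rw [← Finset.sum_sub_distrib]
    exact Finset.sum_congr rfl fun n _ => stepD n k
  have hsplit : ∑ k : Fin K, ∑ n : Fin N,
        ((∑ ℓ ∈ nbr n, (B n k - B ℓ k) ^ 2) - ∑ ℓ ∈ nbr n, (Bt n k - Bt ℓ k) ^ 2)
          / (2 * gradAbs N K ε nbr Bt n k)
      = (∑ k : Fin K, ∑ n : Fin N,
          (∑ ℓ ∈ nbr n, (B n k - B ℓ k) ^ 2) / (2 * gradAbs N K ε nbr Bt n k))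
        - ∑ k : Fin K, ∑ n : Fin N,
            (∑ ℓ ∈ nbr n, (Bt n k - Bt ℓ k) ^ 2) / (2 * gradAbs N K ε nbr Bt n k) := by
    simp only [sub_div, Finset.sum_sub_distrib]
  have hB := stepB B
  linarith [stepA, hB, stepC, stepDsum, hsplit]

end Main

/-- **Explicit surrogate inequality for the smoothed isotropic total variation.**
For all `B, Bt`,
`TV(B) ≤ TV(Bt) + Σ_{n,k} P(Bt)_{nk}[(B_{nk} − Z(Bt)_{nk})² − (Bt_{nk} − Z(Bt)_{nk})²]`;
in particular, for any `τ ≥ 0`,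
`Q(B, Bt) = (τ/2) Σ_{n,k} P(Bt)_{nk}(B_{nk} − Z(Bt)_{nk})² + (τ/2)TV(Bt)
          − (τ/2) Σ_{n,k} P(Bt)_{nk}(Bt_{nk} − Z(Bt)_{nk})²`
is a surrogate function of `(τ/2)TV`. -/
theorem smoothTV_surrogate
    (N K : ℕ) (ε : ℝ) (hε : 0 < ε)
    (nbr : Fin N → Finset (Fin N)) (hnbr : ∀ n, (nbr n).Nonempty)
    (τ : ℝ) (hτ : 0 ≤ τ) :
    (∀ B Bt : Matrix (Fin N) (Fin K) ℝ,
      smoothTV N K ε nbr B ≤ smoothTV N K ε nbr Bt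
        + ∑ k : Fin K, ∑ n : Fin N, Pmat N K ε nbr Bt n k *
            ((B n k - Zmat N K ε nbr Bt n k) ^ 2
              - (Bt n k - Zmat N K ε nbr Bt n k) ^ 2)) ∧
    (∀ B Bt : Matrix (Fin N) (Fin K) ℝ,
      (τ/2) * smoothTV N K ε nbr B ≤
        (τ/2) * (∑ n : Fin N, ∑ k : Fin K,
            Pmat N K ε nbr Bt n k * (B n k - Zmat N K ε nbr Bt n k) ^ 2)
          + (τ/2) * smoothTV N K ε nbr Bt
          - (τ/2) * (∑ n : Fin N, ∑ k : Fin K,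
              Pmat N K ε nbr Bt n k * (Bt n k - Zmat N K ε nbr Bt n k) ^ 2)) ∧
    (∀ B : Matrix (Fin N) (Fin K) ℝ,
      (τ/2) * (∑ n : Fin N, ∑ k : Fin K,
          Pmat N K ε nbr B n k * (B n k - Zmat N K ε nbr B n k) ^ 2)
        + (τ/2) * smoothTV N K ε nbr B
        - (τ/2) * (∑ n : Fin N, ∑ k : Fin K,
            Pmat N K ε nbr B n k * (B n k - Zmat N K ε nbr B n k) ^ 2)
      = (τ/2) * smoothTV N K ε nbr B) := by
  refine ⟨fun B Bt => aux_main hε hnbr B Bt, ?_, fun B => by ring⟩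
  intro B Bt
  have h := aux_main hε hnbr B Bt
  have hτ2 : (0:ℝ) ≤ τ/2 := by linarith
  have h2 := mul_le_mul_of_nonneg_left h hτ2
  have e : ∑ k : Fin K, ∑ n : Fin N, Pmat N K ε nbr Bt n k *
        ((B n k - Zmat N K ε nbr Bt n k) ^ 2 - (Bt n k - Zmat N K ε nbr Bt n k) ^ 2)
      = (∑ n : Fin N, ∑ k : Fin K,
          Pmat N K ε nbr Bt n k * (B n k - Zmat N K ε nbr Bt n k) ^ 2)
        - ∑ n : Fin N, ∑ k : Fin K,
            Pmat N K ε nbr Bt n k * (Bt n k - Zmat N K ε nbr Bt n k) ^ 2 := by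
    rw [Finset.sum_comm]
    simp only [mul_sub, Finset.sum_sub_distrib]
  calc (τ/2) * smoothTV N K ε nbr B
      ≤ (τ/2) * (smoothTV N K ε nbr Bt
          + ∑ k : Fin K, ∑ n : Fin N, Pmat N K ε nbr Bt n k *
              ((B n k - Zmat N K ε nbr Bt n k) ^ 2
                - (Bt n k - Zmat N K ε nbr Bt n k) ^ 2)) := h2
    _ = _ := by rw [e]; ring
end
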